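/- arXiv:1312.6423 — 2 statements merged into one kernel-verified Lean document; each statement's English description precedes it below -/
import Mathlib

section
/- Let g be a stratified Lie algebra of step s equipped with its canonical inner product, and let T : g → g be a Lie algebra automorphism with T(g_{-k}) ⊆ g_{-k} for every k (a strata-preserving automorphism). Then for every j with 1 ≤ j ≤ s, the operator norm of the restriction of T to g_{-j} is at most the j-th power of the operator norm of the restriction of T to g_{-1}. -/
/-- The subspace spanned by brackets of elements of two subspaces of a Lie algebra. -/
def bracketSpan {L : Type*} [LieRing L] [LieAlgebra ℝ L] (A B : Submodule ℝ L) :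
    Submodule ℝ L :=
  Submodule.span ℝ {z : L | ∃ x ∈ A, ∃ y ∈ B, z = ⁅x, y⁆}

/-- A stratification of step `s` of a Lie algebra `L`: `g j` plays the role of the
stratum `g_{-j}`. -/
structure IsStratification {L : Type*} [LieRing L] [LieAlgebra ℝ L]
    (s : ℕ) (g : ℕ → Submodule ℝ L) : Prop where
  pos : 0 < s
  isInternal : DirectSum.IsInternal g
  g_zero : g 0 = ⊥
  g_of_gt : ∀ j, s < j → g j = ⊥
  bracket_eq : ∀ j, 1 ≤ j → j ≤ s → bracketSpan (g j) (g 1) = g (j + 1)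
  g_s_ne_bot : g s ≠ ⊥

/-- The iterated bracket `[...[[E_{w 0}, E_{w 1}], E_{w 2}], ..., E_{w (j-1)}]`. -/
def iterBracket {L : Type*} [LieRing L] [LieAlgebra ℝ L] {d : ℕ} (E : Fin d → L) :
    (j : ℕ) → (Fin j → Fin d) → L
  | 0, _ => 0
  | 1, w => E (w 0)
  | j + 2, w => ⁅iterBracket E (j + 1) (fun k => w k.castSucc), E (w (Fin.last (j + 1)))⁆

/-- The linear map `P_j` from the Euclidean space with orthonormal basis indexed by the
tuples in `{1, ..., d}^j`, sending the basis vector indexed by `w` to the iterated bracket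
`[...[[E_{w 0}, E_{w 1}], E_{w 2}], ..., E_{w (j-1)}]`. -/
noncomputable def projP {L : Type*} [LieRing L] [LieAlgebra ℝ L] {d : ℕ} (E : Fin d → L)
    (j : ℕ) : EuclideanSpace ℝ (Fin j → Fin d) →ₗ[ℝ] L :=
  ((EuclideanSpace.basisFun (Fin j → Fin d) ℝ).toBasis).constr ℝ fun w => iterBracket E j w

/-- The norm associated to a bilinear form `B` on `L`. -/
noncomputable def bnorm {L : Type*} [LieRing L] [LieAlgebra ℝ L]
    (B : L →ₗ[ℝ] L →ₗ[ℝ] ℝ) (x : L) : ℝ :=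
  Real.sqrt (B x x)

/-- `B` is the canonical inner product of a stratified Lie algebra with stratification
`g` of step `s`, relative to the orthonormal basis `E` of the first stratum:
`B` is an inner product, the strata are pairwise orthogonal, `E` is an orthonormal
basis of `g_{-1}`, and for `1 ≤ j ≤ s` the map `P_j` is surjective onto `g_{-j}` and
restricts to a linear isometry from the orthogonal complement of its kernel onto
`g_{-j}`. -/
structure IsCanonicalInner {L : Type*} [LieRing L] [LieAlgebra ℝ L] (s : ℕ) {d : ℕ}
    (g : ℕ → Submodule ℝ L) (B : L →ₗ[ℝ] L →ₗ[ℝ] ℝ) (E : Fin d → L) : Prop where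
  symm : ∀ x y, B x y = B y x
  posdef : ∀ x : L, x ≠ 0 → 0 < B x x
  strata_orth : ∀ i j, i ≠ j → ∀ x ∈ g i, ∀ y ∈ g j, B x y = 0
  basis_mem : ∀ i, E i ∈ g 1
  basis_span : Submodule.span ℝ (Set.range E) = g 1
  basis_orthonormal : ∀ i i', B (E i) (E i') = if i = i' then (1 : ℝ) else 0
  projP_surj : ∀ j, 1 ≤ j → j ≤ s → LinearMap.range (projP E j) = g j
  projP_isometry : ∀ j, 1 ≤ j → j ≤ s →
    ∀ τ ∈ (LinearMap.ker (projP E j))ᗮ, bnorm B (projP E j τ) = ‖τ‖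


section Helpers

variable {L : Type*} [LieRing L] [LieAlgebra ℝ L] {d : ℕ}

lemma sum_lie' {ι : Type*} (s : Finset ι) (f : ι → L) (y : L) :
    ⁅∑ i ∈ s, f i, y⁆ = ∑ i ∈ s, ⁅f i, y⁆ :=
  map_sum (AddMonoidHom.mk' (fun x => ⁅x, y⁆) fun a b => add_lie a b y) f s

lemma lie_sum' {ι : Type*} (s : Finset ι) (y : L) (f : ι → L) :
    ⁅y, ∑ i ∈ s, f i⁆ = ∑ i ∈ s, ⁅y, f i⁆ :=
  map_sum (AddMonoidHom.mk' (fun x => ⁅y, x⁆) fun a b => lie_add y a b) f s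

lemma iterBracket_succ (E : Fin d → L) (n : ℕ) (hn : 1 ≤ n) (w : Fin (n + 1) → Fin d) :
    iterBracket E (n + 1) w = ⁅iterBracket E n (Fin.init w), E (w (Fin.last n))⁆ := by
  match n, hn with
  | (m + 1), _ => rfl

lemma projP_apply (E : Fin d → L) (j : ℕ) (τ : EuclideanSpace ℝ (Fin j → Fin d)) :
    projP E j τ = ∑ w : Fin j → Fin d, τ w • iterBracket E j w := by
  simp [projP, Module.Basis.constr_apply_fintype]

lemma snoc_bij {n : ℕ} :
    Function.Bijective
      (fun p : (Fin n → Fin d) × Fin d => (Fin.snoc p.1 p.2 : Fin (n + 1) → Fin d)) := by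
  constructor
  · intro p q h
    have h2 : p.2 = q.2 := by
      have := congrFun h (Fin.last n); simpa using this
    have h1 : p.1 = q.1 := by
      funext k
      have := congrFun h k.castSucc; simpa using this
    exact Prod.ext h1 h2
  · intro w
    exact ⟨⟨Fin.init w, w (Fin.last n)⟩, Fin.snoc_init_self w⟩

lemma sum_snoc {M : Type*} [AddCommMonoid M] {n : ℕ} (f : (Fin (n + 1) → Fin d) → M) :
    ∑ w : Fin (n + 1) → Fin d, f w
      = ∑ u : Fin n → Fin d, ∑ i : Fin d, f (Fin.snoc u i) := by
  calc ∑ w : Fin (n + 1) → Fin d, f w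
      = ∑ p : (Fin n → Fin d) × Fin d, f (Fin.snoc p.1 p.2) :=
        (Fintype.sum_bijective _ snoc_bij _ _ (fun p => rfl)).symm
    _ = ∑ u : Fin n → Fin d, ∑ i : Fin d, f (Fin.snoc u i) := Fintype.sum_prod_type _

lemma eucl_norm_sq {ι : Type*} [Fintype ι] (x : EuclideanSpace ℝ ι) :
    ‖x‖ ^ 2 = ∑ i, (x i) ^ 2 := by
  rw [EuclideanSpace.norm_eq, Real.sq_sqrt (by positivity)]
  simp [sq_abs]

end Helpers

set_option maxHeartbeats 1000000 in
/-- if `T` is a strata-preserving automorphism of a stratified Lie algebra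
with its canonical inner product, then the operator norm of `T` restricted to `g_{-j}`
is at most the `j`-th power of the operator norm of `T` restricted to `g_{-1}`:
any bound `C ≥ 0` for `T` on `g_{-1}` yields the bound `C ^ j` for `T` on `g_{-j}`. -/
theorem opNorm_restrict_le_pow
    {L : Type*} [LieRing L] [LieAlgebra ℝ L] [FiniteDimensional ℝ L]
    {s d : ℕ} {g : ℕ → Submodule ℝ L} {B : L →ₗ[ℝ] L →ₗ[ℝ] ℝ} {E : Fin d → L}
    (hstrat : IsStratification s g) (hinner : IsCanonicalInner s g B E)
    (T : L ≃ₗ⁅ℝ⁆ L) (hT : ∀ k, ∀ x ∈ g k, T x ∈ g k)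
    {j : ℕ} (hj1 : 1 ≤ j) (hjs : j ≤ s) :
    ∀ C : ℝ, 0 ≤ C → (∀ X ∈ g 1, bnorm B (T X) ≤ C * bnorm B X) →
      ∀ X ∈ g j, bnorm B (T X) ≤ C ^ j * bnorm B X := by
  intro C hC hC1
  classical
  have hBpos : ∀ x : L, 0 ≤ B x x := by
    intro x
    rcases eq_or_ne x 0 with rfl | hx
    · simp
    · exact (hinner.posdef x hx).le
  letI core : InnerProductSpace.Core ℝ L :=
  { inner := fun x y => B x y
    conj_inner_symm := fun x y => hinner.symm y x
    re_inner_nonneg := fun x => hBpos x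
    add_left := fun x y z => by simp
    smul_left := fun x y r => by simp
    definite := fun x hx => by
      by_contra h
      exact absurd hx (ne_of_gt (hinner.posdef x h)) }
  letI : NormedAddCommGroup L := core.toNormedAddCommGroup
  letI : InnerProductSpace ℝ L := InnerProductSpace.ofCore core.toCore
  have hinr : ∀ x y : L, inner ℝ x y = B x y := fun x y => rfl
  have hbn : ∀ x : L, bnorm B x = ‖x‖ := by
    intro x
    rw [bnorm, ← hinr, real_inner_self_eq_norm_sq, Real.sqrt_sq (norm_nonneg x)]
  simp only [hbn] at hC1 ⊢
  set Tl : L →ₗ[ℝ] L := T.toLieHom.toLinearMap with hTldef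
  have hTlie : ∀ x y : L, Tl ⁅x, y⁆ = ⁅Tl x, Tl y⁆ := fun x y => T.toLieHom.map_lie x y
  have hTl : ∀ k, ∀ x ∈ g k, Tl x ∈ g k := hT
  have hC1' : ∀ X ∈ g 1, ‖Tl X‖ ≤ C * ‖X‖ := hC1
  have hisom : ∀ m, 1 ≤ m → m ≤ s → ∀ τ ∈ (LinearMap.ker (projP E m))ᗮ,
      ‖projP E m τ‖ = ‖τ‖ := by
    intro m h1 h2 τ hτ
    rw [← hbn]
    exact hinner.projP_isometry m h1 h2 τ hτ
  have hcontr : ∀ m, 1 ≤ m → m ≤ s → ∀ τ, ‖projP E m τ‖ ≤ ‖τ‖ := by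
    intro m h1 h2 τ
    obtain ⟨p, hp, q, hq, rfl⟩ :=
      Submodule.exists_add_mem_mem_orthogonal (K := LinearMap.ker (projP E m)) τ
    have h0 : projP E m (p + q) = projP E m q := by
      rw [map_add, LinearMap.mem_ker.mp hp, zero_add]
    rw [h0, hisom m h1 h2 q hq]
    have hpq : inner ℝ p q = 0 := Submodule.inner_right_of_mem_orthogonal hp hq
    nlinarith [norm_add_sq_real p q, norm_nonneg q, norm_nonneg (p + q), sq_nonneg ‖p‖]
  have hrep : ∀ m, 1 ≤ m → m ≤ s → ∀ X ∈ g m,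
      ∃ τ ∈ (LinearMap.ker (projP E m))ᗮ, projP E m τ = X ∧ ‖τ‖ = ‖X‖ := by
    intro m h1 h2 X hX
    rw [← hinner.projP_surj m h1 h2] at hX
    obtain ⟨τ0, hτ0⟩ := hX
    obtain ⟨p, hp, q, hq, hpq⟩ :=
      Submodule.exists_add_mem_mem_orthogonal (K := LinearMap.ker (projP E m)) τ0
    have hPq : projP E m q = X := by
      rw [← hτ0, hpq, map_add, LinearMap.mem_ker.mp hp, zero_add]
    exact ⟨q, hq, hPq, by rw [← hPq, hisom m h1 h2 q hq]⟩
  have horthE : Orthonormal ℝ E := by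
    rw [orthonormal_iff_ite]
    intro i i'
    rw [hinr]
    exact hinner.basis_orthonormal i i'
  have hnormsum : ∀ c : Fin d → ℝ, ‖∑ k, c k • E k‖ ^ 2 = ∑ k, (c k) ^ 2 := by
    intro c
    rw [← real_inner_self_eq_norm_sq, horthE.inner_sum c c Finset.univ]
    simp [sq]
  have hTEspan : ∀ i : Fin d, ∃ c : Fin d → ℝ, ∑ k, c k • E k = Tl (E i) := by
    intro i
    rw [← Submodule.mem_span_range_iff_exists_fun ℝ, hinner.basis_span]
    exact hTl 1 (E i) (hinner.basis_mem i)
  choose a ha using hTEspan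
  have hA : ∀ c : Fin d → ℝ, ∑ k, (∑ i, c i * a i k) ^ 2 ≤ C ^ 2 * ∑ i, (c i) ^ 2 := by
    intro c
    have hx1 : (∑ i, c i • E i) ∈ g 1 := by
      rw [← hinner.basis_span]
      exact Submodule.sum_mem _ fun i _ =>
        Submodule.smul_mem _ _ (Submodule.subset_span ⟨i, rfl⟩)
    have hTx : Tl (∑ i, c i • E i) = ∑ k, (∑ i, c i * a i k) • E k := by
      rw [map_sum]
      simp_rw [map_smul, ← ha, Finset.smul_sum, smul_smul]
      rw [Finset.sum_comm]
      simp_rw [← Finset.sum_smul]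
    have h1 := hC1' _ hx1
    rw [hTx] at h1
    have h2 : ‖∑ k, (∑ i, c i * a i k) • E k‖ ^ 2 ≤ (C * ‖∑ i, c i • E i‖) ^ 2 := by
      nlinarith [norm_nonneg (∑ k, (∑ i, c i * a i k) • E k)]
    rw [hnormsum] at h2
    calc ∑ k, (∑ i, c i * a i k) ^ 2 ≤ (C * ‖∑ i, c i • E i‖) ^ 2 := h2
      _ = C ^ 2 * ‖∑ i, c i • E i‖ ^ 2 := by ring
      _ = C ^ 2 * ∑ i, (c i) ^ 2 := by rw [hnormsum]
  have main : ∀ m, 1 ≤ m → m ≤ s → ∀ X ∈ g m, ‖Tl X‖ ≤ C ^ m * ‖X‖ := by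
    intro m hm1
    induction m, hm1 using Nat.le_induction with
    | base => intro _ X hX; simpa using hC1' X hX
    | succ n hn IH =>
      intro hsucc X hX
      have hns : n ≤ s := Nat.le_of_succ_le hsucc
      have IHn := IH hns
      obtain ⟨τ, hτmem, hτP, hτn⟩ := hrep (n + 1) (by omega) hsucc X hX
      set Z : (Fin n → Fin d) → Fin d → L :=
        fun u k => ⁅Tl (iterBracket E n u), E k⁆ with hZ
      set ρ : Fin d → EuclideanSpace ℝ (Fin n → Fin d) :=
        fun k => WithLp.toLp 2 (fun u => ∑ i, τ (Fin.snoc u i) * a i k) with hρ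
      set W : Fin d → L := fun k => Tl (projP E n (ρ k)) with hWdef
      have hWexp : ∀ k, W k = ∑ u, ρ k u • Tl (iterBracket E n u) := by
        intro k
        rw [hWdef]
        simp only []
        rw [projP_apply, map_sum]
        simp_rw [map_smul]
      have key1 : Tl X = ∑ k, ⁅W k, E k⁆ := by
        have e1 : Tl X = ∑ w : Fin (n + 1) → Fin d, τ w • Tl (iterBracket E (n + 1) w) := by
          rw [← hτP, projP_apply, map_sum]
          simp_rw [map_smul]
        have e2 : ∀ w : Fin (n + 1) → Fin d,
            Tl (iterBracket E (n + 1) w)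
              = ∑ k, a (w (Fin.last n)) k • Z (Fin.init w) k := by
          intro w
          rw [iterBracket_succ E n hn w, hTlie, ← ha (w (Fin.last n)), lie_sum']
          simp_rw [lie_smul]
          rfl
        calc Tl X = ∑ w : Fin (n + 1) → Fin d,
              ∑ k, (τ w * a (w (Fin.last n)) k) • Z (Fin.init w) k := by
              rw [e1]
              refine Finset.sum_congr rfl fun w _ => ?_
              rw [e2 w, Finset.smul_sum]
              refine Finset.sum_congr rfl fun k _ => ?_
              rw [smul_smul]
          _ = ∑ u : Fin n → Fin d, ∑ i, ∑ k, (τ (Fin.snoc u i) * a i k) • Z u k := by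
              rw [sum_snoc
                (f := fun w => ∑ k, (τ w * a (w (Fin.last n)) k) • Z (Fin.init w) k)]
              refine Finset.sum_congr rfl fun u _ => Finset.sum_congr rfl fun i _ => ?_
              rw [Fin.snoc_last, Fin.init_snoc]
          _ = ∑ u : Fin n → Fin d, ∑ k, ∑ i, (τ (Fin.snoc u i) * a i k) • Z u k :=
              Finset.sum_congr rfl fun u _ => Finset.sum_comm
          _ = ∑ k, ∑ u : Fin n → Fin d, ∑ i, (τ (Fin.snoc u i) * a i k) • Z u k :=
              Finset.sum_comm
          _ = ∑ k, ⁅W k, E k⁆ := by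
              refine Finset.sum_congr rfl fun k _ => ?_
              rw [hWexp k, sum_lie']
              refine Finset.sum_congr rfl fun u _ => ?_
              rw [smul_lie, hρ]
              simp only []
              rw [Finset.sum_smul]
      have hWmem : ∀ k, W k ∈ g n := by
        intro k
        exact hTl n _ (by rw [← hinner.projP_surj n hn hns]; exact ⟨ρ k, rfl⟩)
      have hWnorm : ∀ k, ‖W k‖ ≤ C ^ n * ‖ρ k‖ := by
        intro k
        calc ‖W k‖ ≤ C ^ n * ‖projP E n (ρ k)‖ :=
              IHn _ (by rw [← hinner.projP_surj n hn hns]; exact ⟨ρ k, rfl⟩)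
          _ ≤ C ^ n * ‖ρ k‖ :=
              mul_le_mul_of_nonneg_left (hcontr n hn hns (ρ k)) (pow_nonneg hC n)
      choose σ hσmem hσP hσn using fun k => hrep n hn hns (W k) (hWmem k)
      set θ : EuclideanSpace ℝ (Fin (n + 1) → Fin d) :=
        WithLp.toLp 2 (fun w => σ (w (Fin.last n)) (Fin.init w)) with hθ
      have key2 : projP E (n + 1) θ = Tl X := by
        rw [projP_apply, sum_snoc (f := fun w => θ w • iterBracket E (n + 1) w), key1]
        rw [Finset.sum_comm]
        refine Finset.sum_congr rfl fun i _ => ?_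
        rw [← hσP i, projP_apply, sum_lie']
        simp_rw [smul_lie]
        refine Finset.sum_congr rfl fun u _ => ?_
        simp only [hθ]
        rw [iterBracket_succ E n hn, Fin.snoc_last, Fin.init_snoc]
      have h1 : ‖θ‖ ^ 2 = ∑ i : Fin d, ‖σ i‖ ^ 2 := by
        rw [eucl_norm_sq, sum_snoc (f := fun w => θ w ^ 2)]
        rw [Finset.sum_comm]
        refine Finset.sum_congr rfl fun i _ => ?_
        rw [eucl_norm_sq]
        refine Finset.sum_congr rfl fun u _ => ?_
        simp only [hθ, Fin.snoc_last]
        rw [Fin.init_snoc]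
      have h2 : ∑ i : Fin d, ‖σ i‖ ^ 2 ≤ (C ^ n) ^ 2 * ∑ i : Fin d, ‖ρ i‖ ^ 2 := by
        rw [Finset.mul_sum]
        refine Finset.sum_le_sum fun i _ => ?_
        rw [hσn i]
        have h := hWnorm i
        nlinarith [norm_nonneg (W i), norm_nonneg (ρ i), pow_nonneg hC n]
      have h3 : ∑ i : Fin d, ‖ρ i‖ ^ 2 ≤ C ^ 2 * ∑ w : Fin (n + 1) → Fin d, (τ w) ^ 2 := by
        calc ∑ i : Fin d, ‖ρ i‖ ^ 2
            = ∑ u : Fin n → Fin d, ∑ i : Fin d, (ρ i u) ^ 2 := by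
              simp_rw [eucl_norm_sq]; exact Finset.sum_comm
          _ ≤ ∑ u : Fin n → Fin d, C ^ 2 * ∑ i, (τ (Fin.snoc u i)) ^ 2 := by
              refine Finset.sum_le_sum fun u _ => ?_
              exact hA (fun i => τ (Fin.snoc u i))
          _ = C ^ 2 * ∑ w : Fin (n + 1) → Fin d, (τ w) ^ 2 := by
              rw [← Finset.mul_sum, sum_snoc (f := fun w => τ w ^ 2)]
      have hθX : ‖θ‖ ≤ C ^ (n + 1) * ‖X‖ := by
        have hsq : ‖θ‖ ^ 2 ≤ (C ^ (n + 1) * ‖X‖) ^ 2 := by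
          rw [h1, ← hτn]
          calc ∑ i : Fin d, ‖σ i‖ ^ 2
              ≤ (C ^ n) ^ 2 * (C ^ 2 * ∑ w : Fin (n + 1) → Fin d, (τ w) ^ 2) :=
              le_trans h2 (mul_le_mul_of_nonneg_left h3 (by positivity))
            _ = (C ^ (n + 1)) ^ 2 * ∑ w : Fin (n + 1) → Fin d, (τ w) ^ 2 := by ring
            _ = (C ^ (n + 1) * ‖τ‖) ^ 2 := by rw [mul_pow, eucl_norm_sq]
        nlinarith [norm_nonneg θ, mul_nonneg (pow_nonneg hC (n + 1)) (norm_nonneg X)]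
      calc ‖Tl X‖ = ‖projP E (n + 1) θ‖ := by rw [key2]
        _ ≤ ‖θ‖ := hcontr (n + 1) (by omega) hsucc θ
        _ ≤ C ^ (n + 1) * ‖X‖ := hθX
  exact main j hj1 hjs
end

section
/- Let g be a stratified Lie algebra of step s equipped with its canonical inner product, let H : g → g be the derivation defined by H(X) = jX for X ∈ g_{-j}, and let D = cH + M where c ∈ ℝ and M is a derivation of g with M(g_{-k}) ⊆ g_{-k} for every k that is skew-symmetric on g_{-1}. Then D is a semisimple linear endomorphism of g. -/
open Polynomial
open scoped RealInnerProductSpace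

/-! ### Auxiliary abstract lemmas -/

section Abstract
set_option linter.unusedSectionVars false
variable {V : Type*} [AddCommGroup V] [Module ℝ V] [FiniteDimensional ℝ V]
  (B : V →ₗ[ℝ] V →ₗ[ℝ] ℝ)

theorem bpos_eq_zero (hpos : ∀ x : V, x ≠ 0 → 0 < B x x) {x : V} (h : B x x = 0) : x = 0 := by
  by_contra hx
  exact absurd h (ne_of_gt (hpos x hx))

/-- If N has a B-adjoint N' commuting with it and N² = 0, then N = 0. -/
theorem normal_sq_zero (hsymm : ∀ x y, B x y = B y x)
    (hpos : ∀ x : V, x ≠ 0 → 0 < B x x)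
    (N N' : Module.End ℝ V) (hadj : ∀ x y, B (N x) y = B x (N' y))
    (hcomm : ∀ x, N (N' x) = N' (N x)) (hsq : ∀ x, N (N x) = 0) (x : V) : N x = 0 := by
  have hz : N' (N x) = 0 := by
    apply bpos_eq_zero B hpos
    have h1 : B (N' (N x)) (N' (N x)) = B (N (N' (N x))) (N x) := by
      rw [hadj]
    rw [h1, hcomm]
    simp [hsq]
  apply bpos_eq_zero B hpos
  rw [hadj, hz]
  simp

/-- Adjointness passes to powers. -/
theorem pow_adjoint (D T : Module.End ℝ V) (hadj : ∀ x y, B (D x) y = B x (T y)) :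
    ∀ (n : ℕ) (x y : V), B ((D ^ n) x) y = B x ((T ^ n) y) := by
  intro n
  induction n with
  | zero => simp
  | succ n ih =>
    intro x y
    rw [pow_succ, pow_succ']
    calc B ((D ^ n) (D x)) y = B (D x) ((T ^ n) y) := ih _ _
    _ = B x (T ((T ^ n) y)) := hadj _ _

theorem aeval_adjoint (D T : Module.End ℝ V) (hadj : ∀ x y, B (D x) y = B x (T y))
    (p : ℝ[X]) (x y : V) : B ((aeval D p) x) y = B x ((aeval T p) y) := by
  induction p using Polynomial.induction_on' with
  | add p q hp hq => simp [map_add, LinearMap.add_apply, hp, hq]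
  | monomial n a =>
    simp only [aeval_monomial, Module.End.mul_apply, Module.algebraMap_end_apply,
      map_smul, LinearMap.smul_apply]
    rw [pow_adjoint B D T hadj]

theorem aeval_comm (D T : Module.End ℝ V) (hDT : Commute D T) (p q : ℝ[X]) :
    Commute (aeval D p) (aeval T q) := by
  have h1 : ∀ r : ℝ[X], Commute D (aeval T r) := by
    intro r
    induction r using Polynomial.induction_on' with
    | add p q hp hq => rw [map_add]; exact hp.add_right hq
    | monomial n a =>
      rw [aeval_monomial]
      exact (Algebra.commute_algebraMap_right a D).mul_right (hDT.pow_right n)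
  induction p using Polynomial.induction_on' with
  | add p p' hp hp' => rw [map_add]; exact hp.add_left hp'
  | monomial n a =>
    rw [aeval_monomial]
    exact (Algebra.commute_algebraMap_left a _).mul_left ((h1 q).pow_left n)

/-- The key abstract result: an endomorphism with a commuting B-adjoint is semisimple. -/
theorem normal_isSemisimple (hsymm : ∀ x y, B x y = B y x)
    (hpos : ∀ x : V, x ≠ 0 → 0 < B x x)
    (D T : Module.End ℝ V) (hadj : ∀ x y, B (D x) y = B x (T y))
    (hDT : Commute D T) : D.IsSemisimple := by
  apply Module.End.isSemisimple_of_squarefree_aeval_eq_zero (p := minpoly ℝ D)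
  · -- Squarefree
    have hμ0 : minpoly ℝ D ≠ 0 := minpoly.ne_zero (LinearMap.isIntegral D)
    intro a ha
    obtain ⟨b, hb⟩ := ha
    by_contra hu
    have hN2 : ∀ x, (aeval D (a * b)) ((aeval D (a * b)) x) = 0 := by
      intro x
      have h0 : aeval D (a * b) * aeval D (a * b) = 0 := by
        rw [← map_mul]
        have : a * b * (a * b) = minpoly ℝ D * b := by rw [hb]; ring
        rw [this, map_mul, minpoly.aeval, zero_mul]
      calc (aeval D (a * b)) ((aeval D (a * b)) x)
          = (aeval D (a * b) * aeval D (a * b)) x := rfl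
      _ = 0 := by rw [h0]; rfl
    have hN0 : ∀ x, (aeval D (a * b)) x = 0 := by
      intro x
      refine normal_sq_zero B hsymm hpos (aeval D (a * b)) (aeval T (a * b))
        (aeval_adjoint B D T hadj _) ?_ hN2 x
      intro y
      have hc := aeval_comm D T hDT (a * b) (a * b)
      calc (aeval D (a*b)) ((aeval T (a*b)) y) = (aeval D (a*b) * aeval T (a*b)) y := rfl
      _ = (aeval T (a*b) * aeval D (a*b)) y := by rw [hc]
      _ = _ := rfl
    have hdvd : minpoly ℝ D ∣ a * b := by
      apply minpoly.dvd
      exact LinearMap.ext hN0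
    have hane : a ≠ 0 := by rintro rfl; simp at hb; exact hμ0 hb
    have hbne : b ≠ 0 := by rintro rfl; exact hμ0 (by rw [hb]; ring)
    obtain ⟨c, hc⟩ := hdvd
    rw [hb] at hc
    have h2 : a * b * 1 = a * b * (a * c) := by
      conv_lhs => rw [mul_one, hc]
      ring
    have h1 : (1 : ℝ[X]) = a * c := mul_left_cancel₀ (mul_ne_zero hane hbne) h2
    exact hu (IsUnit.of_mul_eq_one (a := a) c h1.symm)
  · exact minpoly.aeval ℝ D

end Abstract

/-! ### Lie bracket sums and the derivation formula -/

theorem my_lie_sum {L : Type*} [LieRing L] [LieAlgebra ℝ L] {ι : Type*} (s : Finset ι)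
    (x : L) (f : ι → L) : ⁅x, ∑ i ∈ s, f i⁆ = ∑ i ∈ s, ⁅x, f i⁆ := by
  induction s using Finset.cons_induction with
  | empty => simp
  | cons i s hi ih => simp [Finset.sum_cons, ih]

theorem my_sum_lie {L : Type*} [LieRing L] [LieAlgebra ℝ L] {ι : Type*} (s : Finset ι)
    (x : L) (f : ι → L) : ⁅∑ i ∈ s, f i, x⁆ = ∑ i ∈ s, ⁅f i, x⁆ := by
  induction s using Finset.cons_induction with
  | empty => simp
  | cons i s hi ih => simp [Finset.sum_cons, ih]

theorem M_iterBracket {L : Type*} [LieRing L] [LieAlgebra ℝ L] {d : ℕ} (E : Fin d → L)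
    (M : L →ₗ[ℝ] L) (hMder : ∀ x y : L, M ⁅x, y⁆ = ⁅M x, y⁆ + ⁅x, M y⁆)
    (a : Fin d → Fin d → ℝ) (hrep : ∀ i, M (E i) = ∑ k, a i k • E k) :
    ∀ (j : ℕ) (w : Fin j → Fin d),
      M (iterBracket E j w) =
        ∑ p : Fin j, ∑ k, a (w p) k • iterBracket E j (Function.update w p k)
  | 0, w => by simp [iterBracket]
  | 1, w => by
    rw [show iterBracket E 1 w = E (w 0) from rfl, hrep]
    rw [Fin.sum_univ_one]
    refine Finset.sum_congr rfl fun k _ => ?_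
    rw [show iterBracket E 1 (Function.update w 0 k) = E (Function.update w 0 k 0) from rfl,
      Function.update_self]
  | (j+2), w => by
    have ih := M_iterBracket E M hMder a hrep (j+1) (fun k => w k.castSucc)
    rw [show iterBracket E (j+2) w =
        ⁅iterBracket E (j + 1) (fun k => w k.castSucc), E (w (Fin.last (j + 1)))⁆ from rfl]
    rw [hMder, ih, hrep]
    rw [Fin.sum_univ_castSucc (n := j+1)]
    congr 1
    · rw [my_sum_lie]
      refine Finset.sum_congr rfl fun p _ => ?_
      rw [my_sum_lie]
      refine Finset.sum_congr rfl fun k _ => ?_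
      rw [smul_lie]
      congr 1
      rw [show iterBracket E (j+2) (Function.update w p.castSucc k) =
          ⁅iterBracket E (j + 1) (fun q => Function.update w p.castSucc k q.castSucc),
            E (Function.update w p.castSucc k (Fin.last (j + 1)))⁆ from rfl]
      have h1 : (fun q : Fin (j+1) => Function.update w p.castSucc k q.castSucc)
          = Function.update (fun q : Fin (j+1) => w q.castSucc) p k := by
        funext q
        by_cases hq : q = p
        · subst hq; simp
        · rw [Function.update_of_ne (by simpa using hq), Function.update_of_ne hq]
      have h2 : Function.update w p.castSucc k (Fin.last (j+1)) = w (Fin.last (j+1)) := by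
        rw [Function.update_of_ne]
        exact (Fin.castSucc_lt_last p).ne'
      rw [h1, h2]
    · rw [my_lie_sum]
      refine Finset.sum_congr rfl fun k _ => ?_
      rw [lie_smul]
      congr 1
      rw [show iterBracket E (j+2) (Function.update w (Fin.last (j+1)) k) =
          ⁅iterBracket E (j + 1) (fun q => Function.update w (Fin.last (j+1)) k q.castSucc),
            E (Function.update w (Fin.last (j+1)) k (Fin.last (j + 1)))⁆ from rfl]
      have h1 : (fun q : Fin (j+1) => Function.update w (Fin.last (j+1)) k q.castSucc)
          = fun q : Fin (j+1) => w q.castSucc := by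
        funext q
        rw [Function.update_of_ne (Fin.castSucc_lt_last q).ne]
      rw [h1, Function.update_self]

/-! ### The lift of the derivation to the Euclidean spaces of tuples -/

/-- The lift of the derivation `M` to the Euclidean space of `j`-tuples. -/
noncomputable def liftA {d : ℕ} (a : Fin d → Fin d → ℝ) (j : ℕ) :
    EuclideanSpace ℝ (Fin j → Fin d) →ₗ[ℝ] EuclideanSpace ℝ (Fin j → Fin d) :=
  ((EuclideanSpace.basisFun (Fin j → Fin d) ℝ).toBasis).constr ℝ fun w =>
    ∑ p : Fin j, ∑ k, a (w p) k •
      (EuclideanSpace.basisFun (Fin j → Fin d) ℝ).toBasis (Function.update w p k)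

theorem liftA_basis {d : ℕ} (a : Fin d → Fin d → ℝ) (j : ℕ) (w : Fin j → Fin d) :
    liftA a j ((EuclideanSpace.basisFun (Fin j → Fin d) ℝ).toBasis w) =
      ∑ p : Fin j, ∑ k, a (w p) k •
        (EuclideanSpace.basisFun (Fin j → Fin d) ℝ).toBasis (Function.update w p k) :=
  Module.Basis.constr_basis _ _ _ _

theorem liftA_skew {d : ℕ} (a : Fin d → Fin d → ℝ) (ha : ∀ i k, a i k + a k i = 0) (j : ℕ)
    (τ σ : EuclideanSpace ℝ (Fin j → Fin d)) :
    ⟪liftA a j τ, σ⟫ + ⟪τ, liftA a j σ⟫ = 0 := by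
  set b := (EuclideanSpace.basisFun (Fin j → Fin d) ℝ).toBasis with hb
  have hbo : ∀ u v : Fin j → Fin d, ⟪b u, b v⟫ = if u = v then (1:ℝ) else 0 := by
    intro u v
    have := (EuclideanSpace.basisFun (Fin j → Fin d) ℝ).orthonormal
    rw [orthonormal_iff_ite] at this
    simpa [hb] using this u v
  have key : ∀ w w' : Fin j → Fin d,
      ⟪liftA a j (b w), b w'⟫ + ⟪b w, liftA a j (b w')⟫ = 0 := by
    intro w w'
    rw [liftA_basis, liftA_basis, sum_inner, inner_sum]
    have expand : ∀ (v v' : Fin j → Fin d) (p : Fin j),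
        ⟪∑ k, a (v p) k • b (Function.update v p k), b v'⟫
          = ∑ k, a (v p) k * (if Function.update v p k = v' then (1:ℝ) else 0) := by
      intro v v' p
      rw [sum_inner]
      exact Finset.sum_congr rfl fun k _ => by rw [real_inner_smul_left, hbo]
    have expand' : ∀ (v v' : Fin j → Fin d) (p : Fin j),
        ⟪b v', ∑ k, a (v p) k • b (Function.update v p k)⟫
          = ∑ k, a (v p) k * (if Function.update v p k = v' then (1:ℝ) else 0) := by
      intro v v' p
      rw [real_inner_comm]
      exact expand v v' p
    simp_rw [← hb, expand w w', expand' w' w]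
    rw [← Finset.sum_add_distrib]
    refine Finset.sum_eq_zero fun p _ => ?_
    by_cases hq : ∀ q, q ≠ p → w q = w' q
    · have e1 : (∑ k, a (w p) k * (if Function.update w p k = w' then (1:ℝ) else 0))
          = a (w p) (w' p) := by
        rw [Finset.sum_eq_single (w' p)]
        · have h : Function.update w p (w' p) = w' := by
            funext q
            by_cases hqp : q = p
            · subst hqp; simp
            · rw [Function.update_of_ne hqp]; exact hq q hqp
          rw [if_pos h, mul_one]
        · intro k _ hk
          have h : Function.update w p k ≠ w' := by
            intro hcon
            apply hk
            have := congrFun hcon p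
            rwa [Function.update_self] at this
          rw [if_neg h, mul_zero]
        · intro h; exact absurd (Finset.mem_univ _) h
      have e2 : (∑ k, a (w' p) k * (if Function.update w' p k = w then (1:ℝ) else 0))
          = a (w' p) (w p) := by
        rw [Finset.sum_eq_single (w p)]
        · have h : Function.update w' p (w p) = w := by
            funext q
            by_cases hqp : q = p
            · subst hqp; simp
            · rw [Function.update_of_ne hqp]; exact (hq q hqp).symm
          rw [if_pos h, mul_one]
        · intro k _ hk
          have h : Function.update w' p k ≠ w := by
            intro hcon
            apply hk
            have := congrFun hcon p
            rwa [Function.update_self] at this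
          rw [if_neg h, mul_zero]
        · intro h; exact absurd (Finset.mem_univ _) h
      rw [e1, e2]
      exact ha _ _
    · push_neg at hq
      obtain ⟨q, hqp, hwq⟩ := hq
      have e1 : (∑ k, a (w p) k * (if Function.update w p k = w' then (1:ℝ) else 0)) = 0 := by
        refine Finset.sum_eq_zero fun k _ => ?_
        have h : Function.update w p k ≠ w' := by
          intro hcon
          apply hwq
          have := congrFun hcon q
          rwa [Function.update_of_ne hqp] at this
        rw [if_neg h, mul_zero]
      have e2 : (∑ k, a (w' p) k * (if Function.update w' p k = w then (1:ℝ) else 0)) = 0 := by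
        refine Finset.sum_eq_zero fun k _ => ?_
        have h : Function.update w' p k ≠ w := by
          intro hcon
          apply hwq
          have := congrFun hcon q
          rw [Function.update_of_ne hqp] at this
          exact this.symm
        rw [if_neg h, mul_zero]
      rw [e1, e2, add_zero]
  have hG : (innerₗ (EuclideanSpace ℝ (Fin j → Fin d))).comp (liftA a j)
      + (innerₗ (EuclideanSpace ℝ (Fin j → Fin d))).compl₂ (liftA a j) = 0 := by
    apply b.ext
    intro w
    apply b.ext
    intro w'
    have := key w w'
    simpa [innerₗ_apply_apply, LinearMap.compl₂] using this
  have := LinearMap.congr_fun (LinearMap.congr_fun hG τ) σ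
  simpa [innerₗ_apply_apply, LinearMap.compl₂] using this

theorem liftA_intertwine {L : Type*} [LieRing L] [LieAlgebra ℝ L] {d : ℕ} (E : Fin d → L)
    (M : L →ₗ[ℝ] L) (hMder : ∀ x y : L, M ⁅x, y⁆ = ⁅M x, y⁆ + ⁅x, M y⁆)
    (a : Fin d → Fin d → ℝ) (hrep : ∀ i, M (E i) = ∑ k, a i k • E k) (j : ℕ)
    (τ : EuclideanSpace ℝ (Fin j → Fin d)) :
    projP E j (liftA a j τ) = M (projP E j τ) := by
  have heq : (projP E j).comp (liftA a j) = M.comp (projP E j) := by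
    apply ((EuclideanSpace.basisFun (Fin j → Fin d) ℝ).toBasis).ext
    intro w
    simp only [LinearMap.comp_apply]
    rw [liftA_basis, map_sum]
    rw [show projP E j ((EuclideanSpace.basisFun (Fin j → Fin d) ℝ).toBasis w)
        = iterBracket E j w from Module.Basis.constr_basis _ _ _ _]
    rw [M_iterBracket E M hMder a hrep j w]
    refine Finset.sum_congr rfl fun p _ => ?_
    rw [map_sum]
    refine Finset.sum_congr rfl fun k _ => ?_
    rw [map_smul]
    congr 1
    exact Module.Basis.constr_basis _ _ _ _
  exact LinearMap.congr_fun heq τ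
/-- in a stratified Lie algebra with its canonical inner product, if
`D = c • H + M` where `H` is the derivation acting as `j` on `g_{-j}` and `M` is a
strata-preserving derivation that is skew-symmetric on `g_{-1}`, then `D` is a
semisimple endomorphism: every `D`-invariant subspace has a `D`-invariant complement. -/
theorem conformal_derivation_isSemisimple
    {L : Type*} [LieRing L] [LieAlgebra ℝ L] [FiniteDimensional ℝ L]
    {s d : ℕ} {g : ℕ → Submodule ℝ L} {B : L →ₗ[ℝ] L →ₗ[ℝ] ℝ} {E : Fin d → L}
    (hstrat : IsStratification s g) (hinner : IsCanonicalInner s g B E)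
    (HL : L →ₗ[ℝ] L) (hHL : ∀ j : ℕ, ∀ x ∈ g j, HL x = (j : ℝ) • x)
    (M : L →ₗ[ℝ] L) (hMder : ∀ x y : L, M ⁅x, y⁆ = ⁅M x, y⁆ + ⁅x, M y⁆)
    (hMstr : ∀ k, ∀ x ∈ g k, M x ∈ g k)
    (hMskew : ∀ X ∈ g 1, ∀ Y ∈ g 1, B (M X) Y + B X (M Y) = 0)
    (c : ℝ) :
    ∀ W : Submodule ℝ L, (∀ x ∈ W, (c • HL + M) x ∈ W) →
      ∃ W' : Submodule ℝ L, (∀ x ∈ W', (c • HL + M) x ∈ W') ∧ IsCompl W W' := by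
  have htop : (⨆ i, g i) = ⊤ := hstrat.isInternal.submodule_iSup_eq_top
  have hmem_top : ∀ x : L, x ∈ ⨆ i, g i := fun x => htop ▸ Submodule.mem_top
  -- double induction principle
  have pair_ind : ∀ (C : L → L → Prop)
      (_ : ∀ x x' y, C x y → C x' y → C (x + x') y)
      (_ : ∀ x y y', C x y → C x y' → C x (y + y'))
      (_ : ∀ y, C 0 y) (_ : ∀ x, C x 0)
      (_ : ∀ i k, ∀ x ∈ g i, ∀ y ∈ g k, C x y), ∀ x y, C x y := by
    intro C hadd₁ hadd₂ hz₁ hz₂ hmem x y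
    refine Submodule.iSup_induction (motive := fun z => C z y) g (hmem_top x)
      (fun i u hui => ?_) (hz₁ y) (fun u v hu hv => hadd₁ u v y hu hv)
    refine Submodule.iSup_induction (motive := fun z => C u z) g (hmem_top y)
      (fun k v hvk => hmem i k u hui v hvk) (hz₂ u) (fun v v' hv hv' => hadd₂ u v v' hv hv')
  -- H is B-symmetric
  have hHsymm : ∀ x y, B (HL x) y = B x (HL y) := by
    refine pair_ind _ (fun x x' y hx hx' => ?_) (fun x y y' hy hy' => ?_)
      (fun y => by simp) (fun x => by simp) (fun i k x hx y hy => ?_)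
    · simp only [map_add, LinearMap.add_apply] at *; rw [hx, hx']
    · simp only [map_add, LinearMap.add_apply] at *; rw [hy, hy']
    · rw [hHL i x hx, hHL k y hy]
      by_cases hik : i = k
      · subst hik; simp only [map_smul, LinearMap.smul_apply]
      · have h0 : B x y = 0 := hinner.strata_orth i k hik x hx y hy
        simp only [map_smul, LinearMap.smul_apply, h0, smul_zero]
  -- H and M commute
  have hHM : ∀ x, HL (M x) = M (HL x) := by
    intro x
    refine Submodule.iSup_induction (motive := fun z => HL (M z) = M (HL z)) g (hmem_top x)
      (fun i u hui => ?_) (by simp) (fun u v hu hv => by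
        simp only [map_add]; rw [hu, hv])
    show HL (M u) = M (HL u)
    rw [hHL i (M u) (hMstr i u hui), hHL i u hui, map_smul]
  -- M is B-skew on each stratum
  have hstratskew : ∀ j, ∀ x ∈ g j, ∀ y ∈ g j, B (M x) y + B x (M y) = 0 := by
    intro j x hx y hy
    rcases Nat.eq_zero_or_pos j with hj0 | hj1
    · subst hj0
      rw [hstrat.g_zero, Submodule.mem_bot] at hx
      subst hx
      simp
    rcases le_or_gt j s with hjs | hjs
    swap
    · rw [hstrat.g_of_gt j hjs, Submodule.mem_bot] at hx
      subst hx
      simp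
    -- main case 1 ≤ j ≤ s
    set a : Fin d → Fin d → ℝ := fun i k => B (M (E i)) (E k) with haa
    have hrep : ∀ i, M (E i) = ∑ k, a i k • E k := by
      intro i
      have hmem : M (E i) ∈ g 1 := hMstr 1 (E i) (hinner.basis_mem i)
      rw [← hinner.basis_span] at hmem
      obtain ⟨cf, hcf⟩ := (Submodule.mem_span_range_iff_exists_fun ℝ).mp hmem
      have hcoef : ∀ k, a i k = cf k := by
        intro k
        rw [haa]
        simp only
        rw [← hcf, map_sum]
        simp only [LinearMap.sum_apply, map_smul, LinearMap.smul_apply]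
        rw [Finset.sum_eq_single k]
        · rw [hinner.basis_orthonormal, if_pos rfl]; simp
        · intro m _ hm
          rw [hinner.basis_orthonormal, if_neg hm]; simp
        · intro h; exact absurd (Finset.mem_univ _) h
      rw [← hcf]
      exact Finset.sum_congr rfl fun k _ => by rw [hcoef k]
    have haskew : ∀ i k, a i k + a k i = 0 := by
      intro i k
      have h1 := hMskew (E i) (hinner.basis_mem i) (E k) (hinner.basis_mem k)
      show B (M (E i)) (E k) + B (M (E k)) (E i) = 0
      rw [hinner.symm (M (E k)) (E i)]
      exact h1
    have inter : ∀ τ : EuclideanSpace ℝ (Fin j → Fin d),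
        projP E j (liftA a j τ) = M (projP E j τ) :=
      liftA_intertwine E M hMder a hrep j
    set K := LinearMap.ker (projP E j) with hK
    -- decompose x and y
    have hdecomp : ∀ z ∈ g j, ∃ τ ∈ Kᗮ, projP E j τ = z := by
      intro z hz
      rw [← hinner.projP_surj j hj1 hjs] at hz
      obtain ⟨υ, hυ⟩ := hz
      have hsup : K ⊔ Kᗮ = ⊤ := Submodule.sup_orthogonal_of_hasOrthogonalProjection
      have : υ ∈ K ⊔ Kᗮ := hsup ▸ Submodule.mem_top
      obtain ⟨κ, hκ, τ, hτ, hsum⟩ := Submodule.mem_sup.mp this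
      refine ⟨τ, hτ, ?_⟩
      rw [← hυ, ← hsum, map_add, LinearMap.mem_ker.mp hκ, zero_add]
    obtain ⟨τ, hτ, hPτ⟩ := hdecomp x hx
    obtain ⟨σ, hσ, hPσ⟩ := hdecomp y hy
    -- norms and inner products transfer
    have hnorm : ∀ υ ∈ Kᗮ, B (projP E j υ) (projP E j υ) = ‖υ‖ ^ 2 := by
      intro υ hυ
      have hnn : 0 ≤ B (projP E j υ) (projP E j υ) := by
        rcases eq_or_ne (projP E j υ) 0 with h0 | h0
        · rw [h0]; simp
        · exact le_of_lt (hinner.posdef _ h0)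
      have hiso := hinner.projP_isometry j hj1 hjs υ hυ
      calc B (projP E j υ) (projP E j υ)
          = Real.sqrt (B (projP E j υ) (projP E j υ)) ^ 2 := (Real.sq_sqrt hnn).symm
      _ = ‖υ‖ ^ 2 := by rw [show Real.sqrt (B (projP E j υ) (projP E j υ))
          = bnorm B (projP E j υ) from rfl, hiso]
    have hBinner : ∀ υ ∈ Kᗮ, ∀ ρ ∈ Kᗮ, B (projP E j υ) (projP E j ρ) = ⟪υ, ρ⟫ := by
      intro υ hυ ρ hρ
      have hadd : υ + ρ ∈ Kᗮ := add_mem hυ hρ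
      have h3 := hnorm (υ + ρ) hadd
      rw [map_add] at h3
      simp only [map_add, LinearMap.add_apply] at h3
      rw [norm_add_sq_real] at h3
      have hsy : B (projP E j ρ) (projP E j υ) = B (projP E j υ) (projP E j ρ) :=
        hinner.symm _ _
      rw [hnorm υ hυ, hnorm ρ hρ, hsy] at h3
      linarith
    -- kernel and its complement are invariant
    have hAK : ∀ υ ∈ K, liftA a j υ ∈ K := by
      intro υ hυ
      rw [hK, LinearMap.mem_ker, inter, LinearMap.mem_ker.mp hυ, map_zero]
    have hAKo : ∀ υ ∈ Kᗮ, liftA a j υ ∈ Kᗮ := by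
      intro υ hυ
      rw [Submodule.mem_orthogonal]
      intro u hu
      have hs := liftA_skew a haskew j u υ
      have h1 : ⟪liftA a j u, υ⟫ = 0 :=
        (Submodule.mem_orthogonal K υ).mp hυ (liftA a j u) (hAK u hu)
      linarith
    -- conclude
    rw [← hPτ, ← hPσ, ← inter, ← inter, hBinner _ (hAKo τ hτ) _ hσ,
      hBinner _ hτ _ (hAKo σ hσ)]
    exact liftA_skew a haskew j τ σ
  -- global skewness of M
  have hMskew_all : ∀ x y, B (M x) y + B x (M y) = 0 := by
    refine pair_ind _ (fun x x' y hx hx' => ?_) (fun x y y' hy hy' => ?_)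
      (fun y => by simp) (fun x => by simp) (fun i k x hx y hy => ?_)
    · simp only [map_add, LinearMap.add_apply] at *; linarith
    · simp only [map_add, LinearMap.add_apply] at *; linarith
    · by_cases hik : i = k
      · subst hik
        exact hstratskew i x hx y hy
      · have h1 : B (M x) y = 0 := hinner.strata_orth i k hik (M x) (hMstr i x hx) y hy
        have h2 : B x (M y) = 0 := hinner.strata_orth i k hik x hx (M y) (hMstr k y hy)
        rw [h1, h2, add_zero]
  -- set up D and its adjoint T
  have hadj : ∀ x y, B ((c • HL + M) x) y = B x ((c • HL - M) y) := by
    intro x y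
    simp only [LinearMap.add_apply, LinearMap.sub_apply, LinearMap.smul_apply,
      map_add, map_sub, map_smul, LinearMap.add_apply, LinearMap.sub_apply,
      LinearMap.smul_apply, smul_eq_mul]
    rw [hHsymm x y]
    have h2 := hMskew_all x y
    linarith
  have hC : Commute HL M := LinearMap.ext hHM
  have hA : Commute (c • HL) M := hC.smul_left c
  have hDT : Commute (c • HL + M) (c • HL - M) :=
    Commute.sub_right (Commute.add_left (Commute.refl (c • HL)) hA.symm)
      (Commute.add_left hA (Commute.refl M))
  have hss : Module.End.IsSemisimple (c • HL + M : Module.End ℝ L) :=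
    normal_isSemisimple B hinner.symm hinner.posdef (c • HL + M) (c • HL - M) hadj hDT
  intro W hW
  rw [Module.End.isSemisimple_iff] at hss
  obtain ⟨W', hW', hcompl⟩ := hss W (fun x hx => hW x hx)
  exact ⟨W', fun x hx => hW' hx, hcompl⟩
end
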